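/- arXiv:2002.03978 — 3 statements merged into one kernel-verified Lean document; each statement's English description precedes it below -/
import Mathlib

section
/- For any matrix A ∈ ℝ^{N×N}, there exist an integer q with 0 ≤ q ≤ N, an invertible matrix P ∈ ℝ^{N×N}, an invertible matrix J ∈ ℝ^{q×q}, an integer n ≥ 0, and matrices P_{(0)} ∈ ℝ^{q×N}, P_{(1)},…,P_{(n)} ∈ ℝ^{N×N} such that: (a) P equals the matrix whose first q rows are P_{(0)} and remaining rows zero, plus Σ_{i=1}^n P_{(i)}; (b) rank(P_{(0)}) = q and P_{(0)}A^k = J^k P_{(0)} for all k ≥ 0; (c) for each 1 ≤ i ≤ n, rank(P_{(i)}) = rank(P_{(i)}A^{i−1}) ≤ N − rank(A) and P_{(i)}A^k = 0 for all k ≥ i. -/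
/-!
Let `g` be the endomorphism `x ↦ x A` of row vectors. By Fitting's lemma, for large `M` the
space splits as `ker g^M ⊕ range g^M`; `g` is invertible on `W = range g^M`, so a basis of `W`
gives the rows of `P₀`, and `J` is the matrix of `g|W` in that basis. On `ker g^M` take a basis
adapted to the flag `ker g^0 ≤ ker g^1 ≤ ⋯ ≤ ker g^M`: its `i`-th layer spans a complement
`S_i` of `ker g^i` in `ker g^(i+1)`, and the rows of `P₍ᵢ₊₁₎` are this layer. Since `g^i` is
injective on `S_i` and maps it into `ker g`, the rank conditions follow.
-/

open Matrix Submodule Module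

theorem LinearMap.finrank_map_eq_of_disjoint_ker {K V V' : Type*} [DivisionRing K]
    [AddCommGroup V] [Module K V] [AddCommGroup V'] [Module K V'] {f : V →ₗ[K] V'}
    {p : Submodule K V} (h : Disjoint p (LinearMap.ker f)) :
    finrank K (p.map f) = finrank K p := by
  rw [← LinearMap.range_domRestrict]
  exact LinearMap.finrank_range_of_inj
    (Set.injOn_iff_injective.mp (LinearMap.disjoint_ker_iff_injOn.mp h))

namespace Submodule

variable {K V : Type*} [DivisionRing K] [AddCommGroup V] [Module K V] [FiniteDimensional K V]
  {F : ℕ → Submodule K V}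

theorem exists_linearIndependent_adapted (hF : Monotone F) (hF0 : F 0 = ⊥) (M : ℕ) :
    ∃ (m : ℕ) (u : Fin m → V) (ℓ : Fin m → Fin M), LinearIndependent K u ∧
      (∀ j, u j ∈ F (ℓ j + 1)) ∧ ∀ i ≤ M, F i ≤ span K (u '' {j | (ℓ j : ℕ) < i}) := by
  induction M with
  | zero =>
    refine ⟨0, Fin.elim0, Fin.elim0, linearIndependent_empty_type, (·.elim0), fun i hi => ?_⟩
    simp [Nat.le_zero.mp hi, hF0]
  | succ M ih =>
    obtain ⟨m, u, ℓ, hu, hmem, hspan⟩ := ih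
    obtain ⟨C, hdisj, hsup⟩ := IsModularLattice.exists_disjoint_and_sup_eq (hF M.le_succ)
    obtain ⟨c, -, hc, hc_ind⟩ := exists_fun_fin_finrank_span_eq K (C : Set V)
    replace hc : span K (Set.range c) = C := hc.trans (span_eq C)
    have hu_span : span K (Set.range u) ≤ F M :=
      span_le.mpr (Set.range_subset_iff.mpr fun j => hF (by omega) (hmem j))
    let d := finrank K (span K (C : Set V))
    let u' : Fin (m + d) → V := Fin.append u c
    let ℓ' : Fin (m + d) → Fin (M + 1) := Fin.append (Fin.castSucc ∘ ℓ) fun _ => Fin.last M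
    refine ⟨m + d, u', ℓ', ?_, ?_, fun i hi => ?_⟩
    · rw [← linearIndependent_equiv finSumFinEquiv]
      exact Fin.append_comp_sumElim ▸ hu.sum_type hc_ind (hc ▸ hdisj.mono_left hu_span)
    · refine Fin.addCases (fun j => ?_) (fun j => ?_)
      · simpa [u', ℓ'] using hmem j
      · simp only [u', ℓ', Fin.append_right, Fin.val_last, ← hsup]
        exact mem_sup_right (hc ▸ subset_span ⟨j, rfl⟩)
    · have hu_mem : ∀ j, (ℓ j : ℕ) < i → u j ∈ span K (u' '' {j | (ℓ' j : ℕ) < i}) :=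
        fun j hj => subset_span ⟨Fin.castAdd _ j, by simpa [ℓ'] using hj, by simp [u']⟩
      rcases Nat.lt_or_eq_of_le hi with hi | rfl
      · exact (hspan i (by omega)).trans (span_le.mpr fun _ ⟨j, hj, h⟩ => h ▸ hu_mem j hj)
      · rw [← hsup]
        refine sup_le ((hspan M le_rfl).trans (span_le.mpr ?_)) (hc.ge.trans (span_le.mpr ?_))
        · rintro _ ⟨j, hj, rfl⟩
          exact hu_mem j (Nat.lt_succ_of_lt hj)
        · rintro _ ⟨j, rfl⟩
          exact subset_span ⟨Fin.natAdd _ j, by simp [ℓ'], by simp [u']⟩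

theorem exists_linearIndependent_layers (hF : Monotone F) (hF0 : F 0 = ⊥) (M : ℕ) :
    ∃ (m : ℕ) (u : Fin m → V) (ℓ : Fin m → Fin M), LinearIndependent K u ∧
      span K (Set.range u) = F M ∧ ∀ i : Fin M, span K (u '' {j | ℓ j = i}) ≤ F (i + 1) ∧
        Disjoint (span K (u '' {j | ℓ j = i})) (F i) := by
  obtain ⟨m, u, ℓ, hu, hmem, hspan⟩ := exists_linearIndependent_adapted hF hF0 M
  refine ⟨m, u, ℓ, hu, le_antisymm ?_ ?_, fun i => ⟨?_, ?_⟩⟩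
  · exact span_le.mpr (Set.range_subset_iff.mpr fun j => hF (by omega) (hmem j))
  · exact (hspan M le_rfl).trans (span_mono (Set.image_subset_range _ _))
  · exact span_le.mpr (by rintro _ ⟨j, rfl, rfl⟩; exact hmem j)
  · refine (hu.disjoint_span_image ?_).mono_right (hspan i i.is_lt.le)
    exact Set.disjoint_left.mpr fun j (h1 : ℓ j = i) (h2 : (ℓ j : ℕ) < i) => by omega

end Submodule

namespace Matrix

variable {K : Type*} [Field K] {l m n : Type*}

theorem vecMulLinear_pow [Fintype n] [DecidableEq n] (A : Matrix n n K) (k : ℕ) :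
    A.vecMulLinear ^ k = (A ^ k).vecMulLinear := by
  induction k with
  | zero => ext; simp
  | succ k ih =>
    refine LinearMap.ext fun x => ?_
    rw [pow_succ', Module.End.mul_apply, ih, pow_succ]
    simp [vecMul_vecMul]

theorem ker_vecMulLinear_pow_mono [Fintype n] [DecidableEq n] (A : Matrix n n K) :
    Monotone fun k => LinearMap.ker (A ^ k).vecMulLinear := by
  intro i k hik x hx
  simp only [LinearMap.mem_ker, vecMulLinear_apply] at hx ⊢
  rw [← pow_mul_pow_sub A hik, ← vecMul_vecMul, hx, zero_vecMul]

theorem exists_isCompl_ker_range_vecMulLinear_pow [Fintype n] [DecidableEq n]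
    (A : Matrix n n K) :
    ∃ M, 1 ≤ M ∧
      IsCompl (LinearMap.ker (A ^ M).vecMulLinear) (LinearMap.range (A ^ M).vecMulLinear) := by
  obtain ⟨M, hM1, hM⟩ :=
    ((Filter.eventually_ge_atTop 1).and A.vecMulLinear.eventually_isCompl_ker_pow_range_pow).exists
  exact ⟨M, hM1, by simpa only [vecMulLinear_pow] using hM⟩

theorem exists_eq_mul_of_row_mem_span [Fintype m] (X : Matrix l n K) (Y : Matrix m n K)
    (h : ∀ i, X i ∈ span K (Set.range Y.row)) : ∃ J : Matrix l m K, X = J * Y := by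
  simp_rw [← range_vecMulLinear, LinearMap.mem_range, vecMulLinear_apply] at h
  choose J hJ using h
  exact ⟨J, funext fun i => (hJ i).symm⟩

theorem mul_eq_zero_of_row_mem_ker [Fintype m] {R : Matrix l m K} {B : Matrix m n K}
    (hR : ∀ r, R r ∈ LinearMap.ker B.vecMulLinear) : R * B = 0 :=
  funext fun r => hR r

theorem mul_pow_eq_pow_mul_of_mul_eq_mul [Fintype m] [Fintype n] [DecidableEq m] [DecidableEq n]
    {X : Matrix m n K} {A : Matrix n n K} {J : Matrix m m K} (h : X * A = J * X) (k : ℕ) :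
    X * A ^ k = J ^ k * X := by
  induction k with
  | zero => simp
  | succ k ih =>
    rw [pow_succ, ← Matrix.mul_assoc, ih, Matrix.mul_assoc, h, ← Matrix.mul_assoc, ← pow_succ]

theorem rank_mul_eq_left_of_disjoint_ker [Finite l] [Fintype m] [Fintype n] {R : Matrix l m K}
    {B : Matrix m n K} {S : Submodule K (m → K)}
    (hS : Disjoint S (LinearMap.ker B.vecMulLinear)) (hR : ∀ r, R r ∈ S) :
    (R * B).rank = R.rank := by
  have hrows : span K (Set.range (R * B).row) = (span K (Set.range R.row)).map B.vecMulLinear := by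
    rw [Submodule.map_span, ← Set.range_comp]; rfl
  rw [rank_eq_finrank_span_row, rank_eq_finrank_span_row, hrows]
  exact LinearMap.finrank_map_eq_of_disjoint_ker
    (hS.mono_left (span_le.mpr (Set.range_subset_iff.mpr hR)))

theorem rank_le_card_sub_rank_of_mul_pow_succ_eq_zero [Finite l] [Fintype n] [DecidableEq n]
    {R : Matrix l n K} {A : Matrix n n K} {i : ℕ} (h0 : R * A ^ (i + 1) = 0)
    (hrank : (R * A ^ i).rank = R.rank) : R.rank ≤ Fintype.card n - A.rank := by
  have := rank_add_rank_le_card_of_mul_eq_zero (A := R * A ^ i) (B := A)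
    (by rw [Matrix.mul_assoc, ← pow_succ, h0])
  omega

theorem rank_eq_rank_mul_pow_and_mul_pow_eq_zero_of_row_mem [Finite l] [Fintype n]
    [DecidableEq n] {R : Matrix l n K} {A : Matrix n n K} {i : ℕ} {S : Submodule K (n → K)}
    (hS : S ≤ LinearMap.ker (A ^ (i + 1)).vecMulLinear)
    (hdisj : Disjoint S (LinearMap.ker (A ^ i).vecMulLinear)) (hR : ∀ r, R r ∈ S) :
    R.rank = (R * A ^ i).rank ∧ R.rank ≤ Fintype.card n - A.rank ∧
      ∀ k, i + 1 ≤ k → R * A ^ k = 0 := by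
  have hrank := rank_mul_eq_left_of_disjoint_ker hdisj hR
  have hzero (k : ℕ) (hk : i + 1 ≤ k) : R * A ^ k = 0 :=
    mul_eq_zero_of_row_mem_ker fun r => A.ker_vecMulLinear_pow_mono hk (hS (hR r))
  exact ⟨hrank.symm, rank_le_card_sub_rank_of_mul_pow_succ_eq_zero (hzero _ le_rfl) hrank, hzero⟩

theorem isUnit_of_rank_eq_card [Fintype m] [DecidableEq m] {J : Matrix m m K}
    (h : J.rank = Fintype.card m) : IsUnit J :=
  linearIndependent_rows_iff_isUnit.mp <| linearIndependent_iff_card_eq_finrank_span.mpr <| by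
    rw [← h, rank_eq_finrank_span_row]; rfl

theorem exists_isUnit_mul_pow_eq_pow_mul [Fintype m] [DecidableEq m] [Fintype n] [DecidableEq n]
    {A : Matrix n n K} {X : Matrix m n K} (hX : LinearIndependent K X.row)
    (hinv : ∀ x ∈ span K (Set.range X.row), x ᵥ* A ∈ span K (Set.range X.row))
    (hdisj : Disjoint (span K (Set.range X.row)) (LinearMap.ker A.vecMulLinear)) :
    ∃ J : Matrix m m K, IsUnit J ∧ ∀ k, X * A ^ k = J ^ k * X := by
  obtain ⟨J, hJ⟩ := exists_eq_mul_of_row_mem_span (X * A) X fun i => hinv _ (subset_span ⟨i, rfl⟩)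
  refine ⟨J, isUnit_of_rank_eq_card (le_antisymm (rank_le_card_width J) ?_),
    mul_pow_eq_pow_mul_of_mul_eq_mul hJ⟩
  calc Fintype.card m = (X * A).rank := by
        rw [rank_mul_eq_left_of_disjoint_ker (R := X) hdisj fun r => subset_span ⟨r, rfl⟩,
          hX.rank_matrix]
    _ = (J * X).rank := by rw [hJ]
    _ ≤ J.rank := rank_mul_le_left J X

theorem exists_linearIndependent_fitting_layers [Fintype n] [DecidableEq n] (A : Matrix n n K) :
    ∃ (q m M : ℕ) (w : Fin q → n → K) (u : Fin m → n → K) (ℓ : Fin m → Fin M),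
      q + m = Fintype.card n ∧ LinearIndependent K (Sum.elim w u) ∧
      (∀ x ∈ span K (Set.range w), x ᵥ* A ∈ span K (Set.range w)) ∧
      Disjoint (span K (Set.range w)) (LinearMap.ker A.vecMulLinear) ∧
      ∀ i : Fin M, span K (u '' {j | ℓ j = i}) ≤ LinearMap.ker (A ^ (i + 1 : ℕ)).vecMulLinear ∧
        Disjoint (span K (u '' {j | ℓ j = i})) (LinearMap.ker (A ^ (i : ℕ)).vecMulLinear) := by
  obtain ⟨M, hM1, hM⟩ := A.exists_isCompl_ker_range_vecMulLinear_pow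
  set W := LinearMap.range (A ^ M).vecMulLinear
  obtain ⟨w, -, hw_span, hw⟩ := exists_fun_fin_finrank_span_eq K (W : Set (n → K))
  replace hw_span : span K (Set.range w) = W := hw_span.trans (span_eq W)
  obtain ⟨m, u, ℓ, hu, hu_span, hlayer⟩ :=
    exists_linearIndependent_layers A.ker_vecMulLinear_pow_mono (by ext; simp) M
  refine ⟨_, m, M, w, u, ℓ, ?_, hw.sum_type hu ?_, ?_, ?_, hlayer⟩
  · have := finrank_add_eq_of_isCompl hM
    rw [← hu_span, finrank_span_eq_card hu] at this
    simpa [add_comm] using this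
  · rw [hw_span, hu_span]; exact hM.disjoint.symm
  · rw [hw_span]
    rintro _ ⟨y, rfl⟩
    exact ⟨y ᵥ* A, by simp [vecMul_vecMul, ← pow_succ, ← pow_succ']⟩
  · rw [hw_span]
    exact hM.disjoint.symm.mono_right (by simpa using A.ker_vecMulLinear_pow_mono hM1)

end Matrix

/-- Jordan-type decomposition of `P`: for any `A ∈ ℝ^{N×N}` there are
`q ≤ N`, an invertible `P ∈ ℝ^{N×N}`, an invertible `J ∈ ℝ^{q×q}`, `n ≥ 0`, and matrices
`P₀ ∈ ℝ^{q×N}`, `P₍₁₎,…,P₍ₙ₎ ∈ ℝ^{N×N}` satisfying (a), (b), (c) of Lemma 1. -/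
theorem jordan_type_decomposition {N : ℕ} (A : Matrix (Fin N) (Fin N) ℝ) :
    ∃ (q : ℕ) (_ : q ≤ N) (P : Matrix (Fin N) (Fin N) ℝ)
      (J : Matrix (Fin q) (Fin q) ℝ) (n : ℕ)
      (P0 : Matrix (Fin q) (Fin N) ℝ) (Ps : Fin n → Matrix (Fin N) (Fin N) ℝ),
      IsUnit P ∧ IsUnit J ∧
      P = (Matrix.of fun (i : Fin N) (j : Fin N) => if h : (i : ℕ) < q then P0 ⟨i, h⟩ j else 0) + ∑ i, Ps i ∧
      P0.rank = q ∧ (∀ k : ℕ, P0 * A ^ k = J ^ k * P0) ∧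
      (∀ i : Fin n,
        (Ps i).rank = (Ps i * A ^ (i : ℕ)).rank ∧
        (Ps i).rank ≤ N - A.rank ∧
        ∀ k : ℕ, (i : ℕ) + 1 ≤ k → Ps i * A ^ k = 0) := by
  obtain ⟨q, m, M, w, u, ℓ, hqm, hwu, hinv, hdisj, hlayer⟩ :=
    A.exists_linearIndependent_fitting_layers
  rw [Fintype.card_fin] at hqm
  have hw : LinearIndependent ℝ w := hwu.comp Sum.inl Sum.inl_injective
  obtain ⟨J, hJ, hP0⟩ := exists_isUnit_mul_pow_eq_pow_mul (X := of w) hw hinv hdisj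
  let e : Fin q ⊕ Fin m ≃ Fin N := finSumFinEquiv.trans (finCongr hqm)
  let layer (i : Fin M) : Fin q ⊕ Fin m → Fin N → ℝ :=
    Sum.elim 0 fun j => if ℓ j = i then u j else 0
  have hlayer_mem (i : Fin M) (t) : layer i t ∈ span ℝ (u '' {j | ℓ j = i}) := by
    rcases t with j | j
    · exact zero_mem _
    · simp only [layer, Sum.elim_inr]
      split_ifs with h
      · exact subset_span ⟨j, h, rfl⟩
      · exact zero_mem _
  refine ⟨q, by omega, of fun r => Sum.elim w u (e.symm r), J, M, of w,
    fun i => of fun r => layer i (e.symm r),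
    linearIndependent_rows_iff_isUnit.mp ((linearIndependent_equiv e.symm).mpr hwu), hJ, ?_,
    by simpa using LinearIndependent.rank_matrix (M := of w) hw, hP0, fun i => ?_⟩
  · ext r c
    obtain ⟨t, rfl⟩ := e.surjective r
    rcases t with j | j <;> simp [e, layer, Matrix.sum_apply, ite_apply]
  · simpa using rank_eq_rank_mul_pow_and_mul_pow_eq_zero_of_row_mem
      (R := of fun r => layer i (e.symm r)) (hlayer i).1 (hlayer i).2 fun r => hlayer_mem i _
end

section
/- Let A ∈ ℝ^{N×N} and B ∈ ℝ^{N×m}, and let P_{(i)} ∈ ℝ^{N×N} satisfy P_{(i)}A^k = 0 for all k ≥ i and rank(P_{(i)}A^{i−1}) = rank(P_{(i)}), where i ≥ 1. Suppose that for every x ∈ ℝ^N there exist K ≥ i and nonnegative vectors u_1,…,u_K with x = Σ_{k=1}^K A^{K−k}Bu_k. Then the column space of P_{(i)} is contained in the positive span of the columns of P_{(i)}A^{i−1}B. -/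
/-! Since the columns of `P A^(i-1)` lie in the column space of `P` and the ranks agree, the two
column spaces coincide, so `P w = P A^(i-1) z` for some `z`. Write `z` as a nonnegatively reachable
sum; as `P A^(i-1) A = P A^i = 0`, multiplying by `P A^(i-1)` kills every term except the last input,
leaving `P A^(i-1) B u_K` with `u_K ≥ 0`. -/

open Matrix

namespace Matrix

theorem range_mulVecLin_mul_eq_of_rank_eq {K l m n : Type*} [Field K] [Fintype l] [Fintype m]
    [Fintype n] (P : Matrix l m K) (M : Matrix m n K) (h : (P * M).rank = P.rank) :
    LinearMap.range (P * M).mulVecLin = LinearMap.range P.mulVecLin := by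
  refine Submodule.eq_of_le_of_finrank_eq ?_ h
  rw [mulVecLin_mul]
  exact LinearMap.range_comp_le_range _ _

theorem mulVec_sum_pow_mulVec_eq_of_mul_eq_zero {R n p q : Type*} [CommSemiring R] [Fintype n]
    [DecidableEq n] [Fintype p] {A : Matrix n n R} {Q : Matrix q n R} (hQA : Q * A = 0)
    (B : Matrix n p R) (u : ℕ → p → R) (K : ℕ) :
    Q *ᵥ ∑ k ∈ Finset.range (K + 1), A ^ (K - k) *ᵥ B *ᵥ u k = (Q * B) *ᵥ u K := by
  rw [Finset.sum_range_succ, mulVec_add, mulVec_sum, Nat.sub_self, pow_zero, one_mulVec,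
    mulVec_mulVec, Finset.sum_eq_zero, zero_add]
  intro k hk
  have hK : K - k = K - k - 1 + 1 := by have := Finset.mem_range.mp hk; omega
  rw [hK, pow_succ', mulVec_mulVec, ← Matrix.mul_assoc, hQA, Matrix.zero_mul, zero_mulVec]

end Matrix

theorem colSpace_subset_posSpan_general {N m i : ℕ}
    (A : Matrix (Fin N) (Fin N) ℝ) (B : Matrix (Fin N) (Fin m) ℝ)
    (P : Matrix (Fin N) (Fin N) ℝ)
    (hnil : ∀ k : ℕ, i ≤ k → P * A ^ k = 0)
    (hrank : (P * A ^ (i - 1)).rank = P.rank)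
    (hreach : ∀ x : Fin N → ℝ,
      ∃ K : ℕ, i ≤ K ∧ ∃ u : ℕ → Fin m → ℝ, (∀ k < K, 0 ≤ u k) ∧
        x = ∑ k ∈ Finset.range K, (A ^ (K - 1 - k)) *ᵥ (B *ᵥ u k)) :
    {y : Fin N → ℝ | ∃ w : Fin N → ℝ, P *ᵥ w = y} ⊆
      {y | ∃ α : Fin m → ℝ, 0 ≤ α ∧ (P * A ^ (i - 1) * B) *ᵥ α = y} := by
  rintro _ ⟨w, rfl⟩
  have hQA : P * A ^ (i - 1) * A = 0 := by
    rw [mul_assoc, ← pow_succ]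
    exact hnil _ (by omega)
  obtain ⟨z, hz⟩ : P *ᵥ w ∈ LinearMap.range (P * A ^ (i - 1)).mulVecLin := by
    rw [range_mulVecLin_mul_eq_of_rank_eq P _ hrank]
    exact ⟨w, rfl⟩
  obtain ⟨K, -, u, hu, rfl⟩ := hreach z
  cases K with
  | zero => exact ⟨0, le_rfl, by simpa using hz⟩
  | succ K =>
    refine ⟨u K, hu K K.lt_succ_self, ?_⟩
    rwa [mulVecLin_apply, Nat.add_sub_cancel, mulVec_sum_pow_mulVec_eq_of_mul_eq_zero hQA] at hz

/-- If `P A^k = 0` for all `k ≥ i` (`i ≥ 1`), `rank(P A^{i−1}) = rank P`,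
and every `x ∈ ℝ^N` is reachable via nonnegative inputs in some `K ≥ i` steps, then the
column space of `P` is contained in the positive span of the columns of `P A^{i−1} B`. -/
theorem colSpace_subset_posSpan {N m i : ℕ} (hi : 1 ≤ i)
    (A : Matrix (Fin N) (Fin N) ℝ) (B : Matrix (Fin N) (Fin m) ℝ)
    (P : Matrix (Fin N) (Fin N) ℝ)
    (hnil : ∀ k : ℕ, i ≤ k → P * A ^ k = 0)
    (hrank : (P * A ^ (i - 1)).rank = P.rank)
    (hreach : ∀ x : Fin N → ℝ,
      ∃ K : ℕ, i ≤ K ∧ ∃ u : ℕ → Fin m → ℝ, (∀ k < K, 0 ≤ u k) ∧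
        x = ∑ k ∈ Finset.range K, (A ^ (K - 1 - k)) *ᵥ (B *ᵥ u k)) :
    {y : Fin N → ℝ | ∃ w : Fin N → ℝ, P *ᵥ w = y} ⊆
      {y | ∃ α : Fin m → ℝ, 0 ≤ α ∧ (P * A ^ (i - 1) * B) *ᵥ α = y} :=
  colSpace_subset_posSpan_general A B P hnil hrank hreach
end

section
/- Consider A = diag(−1, −1, 0) ∈ ℝ^{3×3} and B = [[1,0,0,0],[0,1,0,0],[0,0,1,−1]] ∈ ℝ^{3×4}. Then the vector z = (0,0,1)ᵀ is a left eigenvector of A with eigenvalue 0 and satisfies zᵀB = (0,0,1,−1), which is neither ≤ 0 nor = 0; however, for Φ = [[1,0,0,0],[0,1,1,0],[0,−1,−1,0],[0,0,0,1]], one has zᵀ(BΦ) = (0,−1,−1,−1) ≤ 0, so the pair (A, BΦ) violates the nonnegative controllability condition: there exist λ ≥ 0 and z ≠ 0 with zᵀA = λzᵀ and zᵀ(BΦ) ≤ 0. -/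
open Matrix

theorem not_le_zero_of_pos_apply {ι α : Type*} [Preorder α] [Zero α] {v : ι → α} (i : ι)
    (h : 0 < v i) : ¬ v ≤ 0 :=
  fun hv => (h.trans_le (hv i)).false

theorem vec3_eq_single_two {R : Type*} [Zero R] (x : R) : ![0, 0, x] = Pi.single 2 x := by
  ext i; fin_cases i <;> rfl

/-- for the explicit example `A = diag(−1,−1,0)`,
`B = [[1,0,0,0],[0,1,0,0],[0,0,1,−1]]` and the change of basis `Φ`, the vector
`z = (0,0,1)ᵀ` is a left eigenvector of `A` with eigenvalue `0`, `zᵀB = (0,0,1,−1)` is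
neither `≤ 0` nor `= 0`, while `zᵀ(BΦ) = (0,−1,−1,−1) ≤ 0`, so `(A, BΦ)` violates the
nonnegative controllability condition. -/
theorem change_of_basis_counterexample
    (A : Matrix (Fin 3) (Fin 3) ℝ) (B : Matrix (Fin 3) (Fin 4) ℝ)
    (Φ : Matrix (Fin 4) (Fin 4) ℝ) (z : Fin 3 → ℝ)
    (hA : A = !![-1, 0, 0; 0, -1, 0; 0, 0, 0])
    (hB : B = !![1, 0, 0, 0; 0, 1, 0, 0; 0, 0, 1, -1])
    (hΦ : Φ = !![1, 0, 0, 0; 0, 1, 1, 0; 0, -1, -1, 0; 0, 0, 0, 1])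
    (hz : z = ![0, 0, 1]) :
    z ≠ 0 ∧
    z ᵥ* A = (0 : ℝ) • z ∧
    z ᵥ* B = ![0, 0, 1, -1] ∧
    ¬ (z ᵥ* B ≤ 0) ∧ z ᵥ* B ≠ 0 ∧
    z ᵥ* (B * Φ) = ![0, -1, -1, -1] ∧
    z ᵥ* (B * Φ) ≤ 0 ∧
    (∃ (lam : ℝ) (w : Fin 3 → ℝ), 0 ≤ lam ∧ w ≠ 0 ∧
      w ᵥ* A = lam • w ∧ w ᵥ* (B * Φ) ≤ 0) := by
  rw [vec3_eq_single_two] at hz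
  have hz_ne : z ≠ 0 := hz ▸ Pi.single_ne_zero_iff.mpr one_ne_zero
  have hzA : z ᵥ* A = (0 : ℝ) • z := by
    rw [hz, single_one_vecMul, zero_smul, hA]; ext j; fin_cases j <;> rfl
  have hzB : z ᵥ* B = ![0, 0, 1, -1] := by
    rw [hz, single_one_vecMul, hB]; ext j; fin_cases j <;> rfl
  have hzBΦ : z ᵥ* (B * Φ) = ![0, -1, -1, -1] := by
    rw [← vecMul_vecMul, hzB, hΦ]
    ext j; fin_cases j <;> simp [vecMul, dotProduct, Fin.sum_univ_succ]
  have hzBΦ_nonpos : z ᵥ* (B * Φ) ≤ 0 := by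
    rw [hzBΦ]; intro j; fin_cases j <;> norm_num
  have hzB_not_nonpos : ¬ z ᵥ* B ≤ 0 := hzB ▸ not_le_zero_of_pos_apply 2 one_pos
  exact ⟨hz_ne, hzA, hzB, hzB_not_nonpos, fun h => hzB_not_nonpos h.le, hzBΦ, hzBΦ_nonpos,
    0, z, le_rfl, hz_ne, hzA, hzBΦ_nonpos⟩
end
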